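/- arXiv:2412.13325 — 2 statements merged into one kernel-verified Lean document; each statement's English description precedes it below -/
import Mathlib

section
/- Let G = ⟨e₁,e₂⟩ ≅ ℤ² and consider commutators f = [x_{e₁}, y₁^{(k₁)}, …, y_n^{(k_n)}, x_{e₂}, y₁^{(l₁)}, …, y_n^{(l_n)}] and h = [x_{e₁}, y₁^{(k'₁)}, …, y_m^{(k'_m)}, x_{e₂}, y₁^{(l'₁)}, …, y_m^{(l'_m)}] with all exponents non-negative. To such a commutator f associate the sequence V_f = ((k₁,l₁), …, (k_n,l_n)) ∈ D(ℕ₀²). If V_f ⪯ V_h in the Higman order on D(ℕ₀²), then h ∈ ⟨f⟩^{T_G} + Id_G(UT₃⁽⁻⁾, Γ(e₁,e₂)). -/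
/-!
Write `f` and `h` for the two commutators. The Higman relation provides `σ` embedding the indices
of `f` increasingly into those of `h` with `kᵢ ≤ k'_{σ i}` and `lᵢ ≤ l'_{σ i}`, so renaming
`y_j ↦ y_{σ j}` maps each `y`-block of `f` onto a sublist of the corresponding block of `h`. The
missing variables are supplied by the graded substitution `x_{e₁} ↦ [x_{e₁}, P]` (first block) and
by commuting the result with a list `Q` (second block). This gives an element of `⟨f⟩^{T_G}` whose
`y`-blocks are permutations of those of `h`. The degree-`1` component of `Γ(e₁,e₂)` is the
diagonal, which is commutative, so `[w, [y_i, y_j]]` is a graded identity and the `y`'s within a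
block may be reordered modulo `Id_G(UT₃⁽⁻⁾, Γ(e₁,e₂))`.
-/

open FreeLieAlgebra

attribute [local instance] LieRing.ofAssociativeRing

/-- The free `G`-graded Lie algebra over `K` on variables `x_{i,g}`, `i ∈ ℕ`, `g ∈ G`. -/
abbrev FL (K : Type*) [Field K] (G : Type*) := FreeLieAlgebra K (ℕ × G)

section Framework

variable (K : Type*) [Field K] (G : Type*) [CommGroup G]

/-- `IsHom K G g a` : `a` is homogeneous of degree `g` in the free graded Lie algebra. -/
inductive IsHom : G → FL K G → Prop
  | var (i : ℕ) (g : G) : IsHom g (of K (i, g))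
  | zero (g : G) : IsHom g 0
  | add {g : G} {a b : FL K G} : IsHom g a → IsHom g b → IsHom g (a + b)
  | smul {g : G} {a : FL K G} (c : K) : IsHom g a → IsHom g (c • a)
  | lie {g h : G} {a b : FL K G} : IsHom g a → IsHom h b → IsHom (g * h) ⁅a, b⁆

/-- A graded substitution: an endomorphism sending each variable `x_{i,g}` to a homogeneous
element of degree `g`. -/
def IsGradedSubst (φ : FL K G →ₗ⁅K⁆ FL K G) : Prop :=
  ∀ (i : ℕ) (g : G), IsHom K G g (φ (of K (i, g)))

/-- A `T_G`-ideal: a Lie ideal invariant under all graded substitutions. -/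
def IsTIdeal (I : LieIdeal K (FL K G)) : Prop :=
  ∀ φ : FL K G →ₗ⁅K⁆ FL K G, IsGradedSubst K G φ → ∀ a ∈ I, φ a ∈ I

/-- The `T_G`-ideal generated by a set `S`. -/
noncomputable def tClosure (S : Set (FL K G)) : LieIdeal K (FL K G) :=
  sInf {I : LieIdeal K (FL K G) | IsTIdeal K G I ∧ S ⊆ ↑I}

/-- The graded polynomial identities of a `G`-graded Lie algebra `(A, Γ)`, as a Lie ideal of the
free graded Lie algebra. -/
def gradedIdeal (A : Type*) [LieRing A] [LieAlgebra K A] (Γ : G → Submodule K A) :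
    LieIdeal K (FL K G) where
  carrier := {f | ∀ ψ : FL K G →ₗ⁅K⁆ A, (∀ (i : ℕ) (g : G), ψ (of K (i, g)) ∈ Γ g) → ψ f = 0}
  add_mem' := by
    intro a b ha hb ψ hψ
    rw [map_add ψ, ha ψ hψ, hb ψ hψ, add_zero]
  zero_mem' := by
    intro ψ _
    exact ψ.map_zero
  smul_mem' := by
    intro c a ha ψ hψ
    rw [map_smul ψ, ha ψ hψ, smul_zero]
  lie_mem := by
    intro x m hm ψ hψ
    rw [ψ.map_lie, hm ψ hψ, lie_zero]

/-- Left-normed iterated commutator `[x, l₁, l₂, …]`. -/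
noncomputable def lnorm (x : FL K G) (l : List (FL K G)) : FL K G := l.foldl (fun a b => ⁅a, b⁆) x

/-- The list `y₁^{(p₁)}, …, y_r^{(p_r)}` of trivial-degree variables with multiplicities
(0-indexed: the variables are `x_{0,1}, …, x_{r-1,1}`). -/
noncomputable def yRun (p : ℕ → ℕ) : ℕ → List (FL K G)
  | 0 => []
  | n + 1 => yRun p n ++ List.replicate (p n) (of K (n, (1 : G)))

/-- 3×3 matrices. -/
abbrev M3 (K : Type*) [Field K] := Matrix (Fin 3) (Fin 3) K

/-- Matrix units. -/
def E3 (i j : Fin 3) : M3 K := Matrix.single i j 1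

/-- The elementary grading `Γ(g,h)` on upper triangular 3×3 matrices:
`deg e₁₁ = deg e₂₂ = deg e₃₃ = 1`, `deg e₁₂ = g`, `deg e₂₃ = h`, `deg e₁₃ = gh`.  The component of
degree `l` is the span of the matrix units of degree `l`. -/
def utGrading (g h : G) : G → Submodule K (M3 K) := fun l =>
  Submodule.span K {m : M3 K |
    (l = 1 ∧ (m = E3 K 0 0 ∨ m = E3 K 1 1 ∨ m = E3 K 2 2)) ∨
    (l = g ∧ m = E3 K 0 1) ∨ (l = h ∧ m = E3 K 1 2) ∨ (l = g * h ∧ m = E3 K 0 2)}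

/-- The support of the grading `Γ(g,h)`. -/
def utSupp (g h : G) : Set G := {l | utGrading K G g h l ≠ ⊥}

/-- The graded identities `Id_G(UT₃⁽⁻⁾, Γ(g,h))`. -/
def IdUT3 (g h : G) : LieIdeal K (FL K G) := gradedIdeal K G (M3 K) (utGrading K G g h)

/-- 2×2 matrices. -/
abbrev M2 (K : Type*) [Field K] := Matrix (Fin 2) (Fin 2) K

/-- Matrix units. -/
def E2 (i j : Fin 2) : M2 K := Matrix.single i j 1

/-- The space of upper triangular 2×2 matrices, `UT₂⁽⁻⁾`. -/
def ut2 : Submodule K (M2 K) := Submodule.span K {E2 K 0 0, E2 K 1 1, E2 K 0 1}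

/-- Ordinary (ungraded) Lie polynomial identities of `UT₂⁽⁻⁾`. -/
def IdUT2 : Set (FL K G) :=
  {f | ∀ ψ : FL K G →ₗ⁅K⁆ M2 K, (∀ (i : ℕ) (g : G), ψ (of K (i, g)) ∈ ut2 K) → ψ f = 0}

/-- The free Lie subalgebra `L(Y)` on the trivial-degree variables. -/
noncomputable def LY : LieSubalgebra K (FL K G) :=
  LieSubalgebra.lieSpan K (FL K G) {a | ∃ i : ℕ, a = of K (i, (1 : G))}

/-- Exponent bound: `0 ≤ p ℓ < |K|` when `K` is finite (no bound when `K` is infinite). -/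
def expOK (r : ℕ) (p : ℕ → ℕ) : Prop := ∀ ℓ < r, Finite K → p ℓ < Nat.card K

end Framework

/-! ## Statement 5 : Higman-order consequence for two-`x` commutators, universal grading -/

/-- The Higman order on finite sequences: `l₁ ⪯ l₂` iff `l₂` has a sublist that dominates `l₁`
pointwise. -/
def Higman {α : Type*} (le : α → α → Prop) (l₁ l₂ : List α) : Prop :=
  ∃ l : List α, l.Sublist l₂ ∧ List.Forall₂ le l₁ l

/-- The free abelian group of rank 2, `G = ⟨e₁, e₂⟩ ≅ ℤ²` (multiplicative notation). -/
abbrev Gu : Type := Multiplicative (ℤ × ℤ)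

/-- The first free generator. -/
def e1 : Gu := Multiplicative.ofAdd (1, 0)

/-- The second free generator. -/
def e2 : Gu := Multiplicative.ofAdd (0, 1)

namespace List

theorem flatMap_sublist_flatMap_of_map_sublist {ι κ α : Type*} {l : List ι} {t : List κ}
    {σ : ι → κ} {g : ι → List α} {f : κ → List α} (hσ : l.map σ <+ t)
    (hgf : ∀ i ∈ l, g i <+ f (σ i)) : l.flatMap g <+ t.flatMap f :=
  calc l.flatMap g <+ l.flatMap (fun i => f (σ i)) := Sublist.flatMap_right l hgf
    _ = (l.map σ).flatMap f := (flatMap_map σ f l).symm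
    _ <+ t.flatMap f := hσ.flatMap f

end List

theorem Higman.exists_map_range_sublist {α : Type*} {le : α → α → Prop} {n m : ℕ}
    {a b : ℕ → α} (h : Higman le ((List.range n).map a) ((List.range m).map b)) :
    ∃ σ : ℕ → ℕ, ((List.range n).map σ).Sublist (List.range m) ∧ ∀ i < n, le (a i) (b (σ i)) := by
  obtain ⟨_, hsub, hle⟩ := h
  obtain ⟨s, hs, rfl⟩ := List.sublist_map_iff.mp hsub
  have hlen : s.length = n := by simpa using hle.length_eq.symm
  have hs_eq : (List.range n).map (fun i => s.getD i 0) = s :=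
    List.ext_getElem (by simp [hlen]) fun i _ hi => by simp [List.getElem?_eq_getElem hi]
  refine ⟨fun i => s.getD i 0, by rwa [hs_eq], fun i hi => ?_⟩
  rw [← hs_eq] at hle
  simp only [List.forall₂_map_left_iff, List.forall₂_map_right_iff, List.forall₂_same] at hle
  exact hle i (List.mem_range.2 hi)

section LeftNormed

variable {K : Type*} [Field K] {G : Type*}

theorem lnorm_cons (x a : FL K G) (l : List (FL K G)) :
    lnorm K G x (a :: l) = lnorm K G ⁅x, a⁆ l := rfl

theorem lnorm_append (x : FL K G) (l l' : List (FL K G)) :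
    lnorm K G x (l ++ l') = lnorm K G (lnorm K G x l) l' :=
  List.foldl_append

theorem lnorm_sub (x y : FL K G) (l : List (FL K G)) :
    lnorm K G (x - y) l = lnorm K G x l - lnorm K G y l := by
  induction l generalizing x y with
  | nil => rfl
  | cons a l ih => rw [lnorm_cons, lnorm_cons, lnorm_cons, sub_lie, ih]

theorem lnorm_mem_of_mem {I : LieIdeal K (FL K G)} {x : FL K G} (hx : x ∈ I) (l : List (FL K G)) :
    lnorm K G x l ∈ I := by
  induction l generalizing x with
  | nil => exact hx
  | cons a l ih => exact ih (lie_mem_left K _ I x a hx)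

theorem LieHom.map_lnorm (φ : FL K G →ₗ⁅K⁆ FL K G) (x : FL K G) (l : List (FL K G)) :
    φ (lnorm K G x l) = lnorm K G (φ x) (l.map φ) := by
  induction l generalizing x with
  | nil => rfl
  | cons a l ih => rw [lnorm_cons, List.map_cons, lnorm_cons, ih, φ.map_lie]

end LeftNormed

section FreeGradedLie

variable {K : Type*} [Field K] {G : Type*} [CommGroup G]

variable (K G) in
def yVars : Set (FL K G) := Set.range fun j : ℕ => of K (j, (1 : G))

theorem IsHom.lnorm {g : G} {x : FL K G} (hx : IsHom K G g x) {l : List (FL K G)}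
    (hl : ∀ a ∈ l, IsHom K G 1 a) : IsHom K G g (lnorm K G x l) := by
  induction l generalizing x with
  | nil => exact hx
  | cons a l ih =>
    refine ih ?_ fun b hb => hl b (List.mem_cons_of_mem _ hb)
    simpa using hx.lie (hl a List.mem_cons_self)

theorem isHom_one_of_mem_yVars {a : FL K G} (ha : a ∈ yVars K G) : IsHom K G 1 a := by
  obtain ⟨j, rfl⟩ := ha
  exact IsHom.var j 1

theorem yRun_eq_flatMap (p : ℕ → ℕ) (r : ℕ) :
    yRun K G p r = (List.range r).flatMap fun i => List.replicate (p i) (of K (i, (1 : G))) := by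
  induction r with
  | zero => rfl
  | succ r ih => simp [yRun, ih, List.range_succ]

theorem mem_yVars_of_mem_yRun {p : ℕ → ℕ} {r : ℕ} {a : FL K G} (ha : a ∈ yRun K G p r) :
    a ∈ yVars K G := by
  simp only [yRun_eq_flatMap, List.mem_flatMap, List.mem_replicate] at ha
  obtain ⟨i, -, -, rfl⟩ := ha
  exact ⟨i, rfl⟩

theorem map_mem_tClosure {S : Set (FL K G)} {φ : FL K G →ₗ⁅K⁆ FL K G}
    (hφ : IsGradedSubst K G φ) {a : FL K G} (ha : a ∈ S) : φ a ∈ tClosure K G S := by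
  rw [tClosure, ← SetLike.mem_coe, LieSubmodule.coe_sInf, Set.mem_iInter₂]
  exact fun I hI => hI.1 φ hφ a (hI.2 ha)

variable (K G) in
theorem flatMap_replicate_sublist_yRun {σ : ℕ → ℕ} {n m : ℕ}
    (hσ : ((List.range n).map σ).Sublist (List.range m)) {p p' : ℕ → ℕ}
    (hp : ∀ i < n, p i ≤ p' (σ i)) :
    ((List.range n).flatMap fun i => List.replicate (p i) (of K (σ i, (1 : G)))).Sublist
      (yRun K G p' m) := by
  rw [yRun_eq_flatMap]
  refine List.flatMap_sublist_flatMap_of_map_sublist hσ fun i hi => ?_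
  exact (List.replicate_sublist_replicate _).2 (hp i (List.mem_range.1 hi))

theorem map_yRun (φ : FL K G → FL K G) (p : ℕ → ℕ) (r : ℕ) :
    (yRun K G p r).map φ =
      (List.range r).flatMap fun i => List.replicate (p i) (φ (of K (i, (1 : G)))) := by
  simp [yRun_eq_flatMap, List.map_flatMap]

open Classical in
variable (K) in
noncomputable def renameSubst (σ : ℕ → ℕ) (q₀ : ℕ × G) (u : FL K G) :
    FL K G →ₗ⁅K⁆ FL K G :=
  lift K fun q => if q = q₀ then u else if q.2 = 1 then of K (σ q.1, 1) else of K q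

theorem renameSubst_of_self (σ : ℕ → ℕ) (q₀ : ℕ × G) (u : FL K G) :
    renameSubst K σ q₀ u (of K q₀) = u := by
  simp [renameSubst]

theorem renameSubst_of_one (σ : ℕ → ℕ) {q₀ : ℕ × G} (hq₀ : q₀.2 ≠ 1) (u : FL K G) (j : ℕ) :
    renameSubst K σ q₀ u (of K (j, 1)) = of K (σ j, 1) := by
  have : (j, (1 : G)) ≠ q₀ := fun h => hq₀ (h ▸ rfl)
  simp [renameSubst, this]

theorem renameSubst_of_of_ne (σ : ℕ → ℕ) {q₀ q : ℕ × G} (hq : q ≠ q₀) (hq1 : q.2 ≠ 1)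
    (u : FL K G) : renameSubst K σ q₀ u (of K q) = of K q := by
  simp [renameSubst, hq, hq1]

theorem isGradedSubst_renameSubst (σ : ℕ → ℕ) {q₀ : ℕ × G} {u : FL K G}
    (hu : IsHom K G q₀.2 u) : IsGradedSubst K G (renameSubst K σ q₀ u) := by
  intro i g
  simp only [renameSubst, lift_of_apply]
  split_ifs with h h1
  · subst h
    exact hu
  · subst h1
    exact IsHom.var _ _
  · exact IsHom.var _ _

end FreeGradedLie

section Reordering

variable {K : Type*} [Field K] {G : Type*} {I : LieIdeal K (FL K G)} {Y : Set (FL K G)}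

theorem lnorm_sub_lnorm_mem_of_perm (hY : ∀ w : FL K G, ∀ a ∈ Y, ∀ b ∈ Y, ⁅w, ⁅a, b⁆⁆ ∈ I)
    {l l' : List (FL K G)} (hp : l.Perm l') (hl : ∀ a ∈ l, a ∈ Y) (w : FL K G) :
    lnorm K G w l - lnorm K G w l' ∈ I := by
  induction hp generalizing w with
  | nil => simp
  | cons a _ ih => exact ih (fun b hb => hl b (List.mem_cons_of_mem _ hb)) _
  | swap a b l =>
    rw [lnorm_cons, lnorm_cons, lnorm_cons, lnorm_cons, ← lnorm_sub]
    have jacobi : ⁅⁅w, b⁆, a⁆ - ⁅⁅w, a⁆, b⁆ = ⁅w, ⁅b, a⁆⁆ := by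
      rw [leibniz_lie, ← lie_skew b ⁅w, a⁆]
      abel
    rw [jacobi]
    exact lnorm_mem_of_mem (hY w b (hl b (by simp)) a (hl a (by simp))) l
  | trans h₁ _ ih₁ ih₂ =>
    rw [← sub_add_sub_cancel]
    exact add_mem (ih₁ hl w) (ih₂ (fun a ha => hl a (h₁.mem_iff.2 ha)) w)

theorem lnorm_append_cons_sub_mem_of_perm
    (hY : ∀ w : FL K G, ∀ a ∈ Y, ∀ b ∈ Y, ⁅w, ⁅a, b⁆⁆ ∈ I)
    {u u' v v' : List (FL K G)} (hu : u.Perm u') (hv : v.Perm v') (huY : ∀ a ∈ u, a ∈ Y)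
    (hvY : ∀ a ∈ v, a ∈ Y) (x z : FL K G) :
    lnorm K G x (u ++ z :: v) - lnorm K G x (u' ++ z :: v') ∈ I := by
  rw [← sub_add_sub_cancel _ (lnorm K G x (u' ++ z :: v))]
  refine add_mem ?_ ?_
  · rw [lnorm_append, lnorm_append, ← lnorm_sub]
    exact lnorm_mem_of_mem (lnorm_sub_lnorm_mem_of_perm hY hu huY x) _
  · rw [lnorm_append, lnorm_append, lnorm_cons, lnorm_cons]
    exact lnorm_sub_lnorm_mem_of_perm hY hv hvY _

end Reordering

section UpperTriangular

variable {K : Type*} [Field K] {G : Type*} [CommGroup G]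

theorem utGrading_one_le_range_diagonal {g h : G} (hg : g ≠ 1) (hh : h ≠ 1) (hgh : g * h ≠ 1) :
    utGrading K G g h 1 ≤ LinearMap.range (Matrix.diagonalLinearMap (Fin 3) K K) := by
  refine Submodule.span_le.2 ?_
  rintro m (⟨-, rfl | rfl | rfl⟩ | ⟨h1, -⟩ | ⟨h1, -⟩ | ⟨h1, -⟩)
  · exact ⟨Pi.single 0 1, Matrix.diagonal_single _ _⟩
  · exact ⟨Pi.single 1 1, Matrix.diagonal_single _ _⟩
  · exact ⟨Pi.single 2 1, Matrix.diagonal_single _ _⟩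
  · exact absurd h1.symm hg
  · exact absurd h1.symm hh
  · exact absurd h1.symm hgh

theorem lie_eq_zero_of_mem_utGrading_one {g h : G} (hg : g ≠ 1) (hh : h ≠ 1) (hgh : g * h ≠ 1)
    {a b : M3 K} (ha : a ∈ utGrading K G g h 1) (hb : b ∈ utGrading K G g h 1) : ⁅a, b⁆ = 0 := by
  obtain ⟨d, rfl⟩ := utGrading_one_le_range_diagonal hg hh hgh ha
  obtain ⟨e, rfl⟩ := utGrading_one_le_range_diagonal hg hh hgh hb
  simp [Ring.lie_def, Matrix.diagonal_mul_diagonal, mul_comm]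

theorem lie_lie_mem_IdUT3 {g h : G} (hg : g ≠ 1) (hh : h ≠ 1) (hgh : g * h ≠ 1) (w : FL K G)
    {a b : FL K G} (ha : a ∈ yVars K G) (hb : b ∈ yVars K G) : ⁅w, ⁅a, b⁆⁆ ∈ IdUT3 K G g h := by
  obtain ⟨i, rfl⟩ := ha
  obtain ⟨j, rfl⟩ := hb
  intro ψ hψ
  rw [ψ.map_lie, ψ.map_lie, lie_eq_zero_of_mem_utGrading_one hg hh hgh (hψ i 1) (hψ j 1),
    lie_zero]

end UpperTriangular

theorem lnorm_mem_tClosure_sup_IdUT3_of_higman {K : Type*} [Field K] {G : Type*} [CommGroup G]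
    {g h : G} (hg : g ≠ 1) (hh : h ≠ 1) (hgh : g * h ≠ 1) (hhg : h ≠ g) {n m : ℕ}
    {k l k' l' : ℕ → ℕ} (hH : Higman (· ≤ ·) ((List.range n).map (fun i => (k i, l i)))
      ((List.range m).map (fun i => (k' i, l' i)))) :
    lnorm K G (of K (0, g)) (yRun K G k' m ++ of K (0, h) :: yRun K G l' m) ∈
      tClosure K G {lnorm K G (of K (0, g)) (yRun K G k n ++ of K (0, h) :: yRun K G l n)} ⊔
      IdUT3 K G g h := by
  obtain ⟨σ, hσ, hle⟩ := hH.exists_map_range_sublist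
  set ren : (ℕ → ℕ) → List (FL K G) := fun p =>
    (List.range n).flatMap fun i => List.replicate (p i) (of K (σ i, (1 : G)))
  obtain ⟨P, hP⟩ :=
    (flatMap_replicate_sublist_yRun K G hσ fun i hi => (hle i hi).1).exists_perm_append
  obtain ⟨Q, hQ⟩ :=
    (flatMap_replicate_sublist_yRun K G hσ fun i hi => (hle i hi).2).exists_perm_append
  have hPY : ∀ a ∈ P, a ∈ yVars K G :=
    fun a ha => mem_yVars_of_mem_yRun (hP.mem_iff.2 (List.mem_append_right _ ha))
  set φ := renameSubst K σ (0, g) (lnorm K G (of K (0, g)) P)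
  have hφ : IsGradedSubst K G φ := isGradedSubst_renameSubst σ
    ((IsHom.var 0 g).lnorm fun a ha => isHom_one_of_mem_yVars (hPY a ha))
  have hφy : ∀ j, φ (of K (j, 1)) = of K (σ j, 1) := renameSubst_of_one σ hg _
  have hφf :
      lnorm K G (φ (lnorm K G (of K (0, g)) (yRun K G k n ++ of K (0, h) :: yRun K G l n))) Q =
        lnorm K G (of K (0, g)) ((P ++ ren k) ++ of K (0, h) :: (ren l ++ Q)) := by
    rw [LieHom.map_lnorm, List.map_append, List.map_cons, map_yRun, map_yRun, renameSubst_of_self,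
      renameSubst_of_of_ne σ (by simpa using hhg) hh]
    simp only [hφy, ← lnorm_append, ren]
    simp
  have hT := hφf ▸ lnorm_mem_of_mem (map_mem_tClosure hφ (Set.mem_singleton _)) Q
  have hId := lnorm_append_cons_sub_mem_of_perm
    (fun w _ ha _ hb => lie_lie_mem_IdUT3 hg hh hgh w ha hb)
    (hP.trans List.perm_append_comm) hQ (fun _ => mem_yVars_of_mem_yRun)
    (fun _ => mem_yVars_of_mem_yRun) (of K (0, g)) (of K (0, h))
  exact (LieSubmodule.mem_sup _ _ _).2 ⟨_, hT, _, hId, add_sub_cancel _ _⟩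

/-- **Lemma.** For `f = [x_{e₁}, y₁^{(k₁)},…,y_n^{(k_n)}, x_{e₂}, y₁^{(l₁)},…,y_n^{(l_n)}]` and
`h = [x_{e₁}, y₁^{(k'₁)},…,y_m^{(k'_m)}, x_{e₂}, y₁^{(l'₁)},…,y_m^{(l'_m)}]`, if
`V_f = ((k₁,l₁),…,(k_n,l_n)) ⪯ ((k'₁,l'₁),…,(k'_m,l'_m)) = V_h` in the Higman order on
`D(ℕ₀²)`, then `h ∈ ⟨f⟩^{T_G} + Id_G(UT₃⁽⁻⁾, Γ(e₁,e₂))`. -/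
theorem stmt5 (K : Type*) [Field K] (n m : ℕ) (k l k' l' : ℕ → ℕ)
    (hH : Higman (· ≤ ·) ((List.range n).map (fun i => (k i, l i)))
      ((List.range m).map (fun i => (k' i, l' i)))) :
    lnorm K Gu (of K (0, e1)) (yRun K Gu k' m ++ of K (0, e2) :: yRun K Gu l' m) ∈
      tClosure K Gu
        {lnorm K Gu (of K (0, e1)) (yRun K Gu k n ++ of K (0, e2) :: yRun K Gu l n)} ⊔
      IdUT3 K Gu e1 e2 :=
  lnorm_mem_tClosure_sup_IdUT3_of_higman (by decide) (by decide) (by decide) (by decide) hH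
end

section
/- Let G = ⟨e₁,e₂⟩ ≅ ℤ² and let f and h be polynomials of type (e₁,e₂). If V_{M(f)} ⪯ V_{M(h)} in the Higman order on D(ℕ₀²), then there exists h' ∈ ⟨f⟩^{T_G} + Id_G(UT₃⁽⁻⁾, Γ(e₁,e₂)) such that M(h) = M(h'). -/
open FreeLieAlgebra

attribute [local instance 100] LieRing.ofAssociativeRing

/-- The commutator `[x_{e₁}, y₁^{(p₁)},…,y_r^{(p_r)}, x_{e₂}, y₁^{(q₁)},…,y_r^{(q_r)}]`. -/
noncomputable def monE12 (K : Type*) [Field K] (r : ℕ) (p q : ℕ → ℕ) : FL K Gu :=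
  lnorm K Gu (of K (0, e1)) (yRun K Gu p r ++ of K (0, e2) :: yRun K Gu q r)

/-- Data describing a polynomial of type `(e₁,e₂)`:
`f = Σ_{s} α_s [x_{e₁}, y₁^{(p_{1,s})},…,y_r^{(p_{r,s})}, x_{e₂}, y₁^{(q_{1,s})},…,y_r^{(q_{r,s})}]`. -/
structure E12Data (K : Type*) [Field K] where
  /-- number of `y` variables -/
  r : ℕ
  /-- number of summands -/
  t : ℕ
  /-- coefficients -/
  α : Fin t → K
  /-- exponents on the `y`'s before `x_{e₂}` -/
  p : Fin t → ℕ → ℕ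
  /-- exponents on the `y`'s after `x_{e₂}` -/
  q : Fin t → ℕ → ℕ

/-- The polynomial described by the data. -/
noncomputable def E12Data.elem {K : Type*} [Field K] (d : E12Data K) : FL K Gu :=
  ∑ s : Fin d.t, d.α s • monE12 K d.r (d.p s) (d.q s)

/-- Validity: at least one summand, all coefficients nonzero, all summands have the same
multidegree in the `y`'s, and the summands are pairwise distinct commutators. -/
def E12Data.Valid {K : Type*} [Field K] (d : E12Data K) : Prop :=
  0 < d.t ∧ (∀ s, d.α s ≠ 0) ∧
  (∀ s s' : Fin d.t, ∀ ℓ < d.r, d.p s ℓ + d.q s ℓ = d.p s' ℓ + d.q s' ℓ) ∧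
  (∀ s s' : Fin d.t, (∀ ℓ < d.r, d.p s ℓ = d.p s' ℓ ∧ d.q s ℓ = d.q s' ℓ) → s = s')

/-- The order `<'` on commutators of type `(e₁,e₂)` of the same multidegree: compare the total
degree in the `y`'s before `x_{e₂}`, then the exponent sequences lexicographically. -/
def monLT (r : ℕ) (p p' : ℕ → ℕ) : Prop :=
  (∑ i ∈ Finset.range r, p i) < (∑ i ∈ Finset.range r, p' i) ∨
  ((∑ i ∈ Finset.range r, p i) = (∑ i ∈ Finset.range r, p' i) ∧
    List.Lex (· < ·) ((List.range r).map p) ((List.range r).map p'))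

/-- `s₀` is the index of the leading monomial `M(f)` of the polynomial described by `d`. -/
def E12Data.IsLead {K : Type*} [Field K] (d : E12Data K) (s₀ : Fin d.t) : Prop :=
  ∀ s : Fin d.t, s ≠ s₀ → monLT d.r (d.p s) (d.p s₀)

/-- The sequence `V_c = ((k₁,l₁),…,(k_r,l_r)) ∈ D(ℕ₀²)` associated to a commutator. -/
def Vseq (r : ℕ) (p q : ℕ → ℕ) : List (ℕ × ℕ) := (List.range r).map (fun i => (p i, q i))


/-!
The Higman embedding `mf` of `V_{M(f)}` into `V_{M(h)}` is realised by the graded substitution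
`y_n ↦ y_{mf n}`, `x_{e₁} ↦ [x_{e₁}, y^{(a)}]`, followed by bracketing on the right with
`y^{(b)}`, where `a` and `b` fill the gaps between the exponents of `M(f)` and `M(h)`. This lands
in `⟨f⟩^{T_G}`. Under `Γ(e₁,e₂)` the trivial-degree variables go to diagonal matrices, so every
commutator of type `(e₁,e₂)` evaluates to a multiple of `e₁₃` that depends only on the exponent
vectors before and after `x_{e₂}`. Hence, modulo `Id_G(UT₃⁽⁻⁾)`, the substituted polynomial equals
the one obtained by renaming and adding the exponents. Since `mf` is strictly increasing, the
leading monomial of `f` stays leading, and it becomes `M(h)`.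
-/

open Finset

section LeftNormed

variable {R A B : Type*} [CommRing R] [LieRing A] [LieAlgebra R A] [LieRing B] [LieAlgebra R B]

def leftNormed (x : A) (l : List A) : A := l.foldl (fun a b => ⁅a, b⁆) x

@[simp] lemma leftNormed_nil (x : A) : leftNormed x [] = x := rfl

@[simp] lemma leftNormed_cons (x z : A) (l : List A) :
    leftNormed x (z :: l) = leftNormed ⁅x, z⁆ l := rfl

lemma leftNormed_append (x : A) (l₁ l₂ : List A) :
    leftNormed x (l₁ ++ l₂) = leftNormed (leftNormed x l₁) l₂ := List.foldl_append ..

lemma LieHom.map_leftNormed (φ : A →ₗ⁅R⁆ B) (x : A) (l : List A) :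
    φ (leftNormed x l) = leftNormed (φ x) (l.map φ) := by
  induction l generalizing x with
  | nil => rfl
  | cons z l ih => simp only [List.map_cons, leftNormed_cons, ← LieHom.map_lie, ih]

lemma leftNormed_sum {ι : Type*} (s : Finset ι) (x : ι → A) (l : List A) :
    leftNormed (∑ i ∈ s, x i) l = ∑ i ∈ s, leftNormed (x i) l := by
  induction l generalizing x with
  | nil => rfl
  | cons z l ih => simp only [leftNormed_cons, sum_lie, ih]

lemma leftNormed_smul (c : R) (x : A) (l : List A) :
    leftNormed (c • x) l = c • leftNormed x l := by
  induction l generalizing x with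
  | nil => rfl
  | cons z l ih => simp only [leftNormed_cons, smul_lie, ih]

lemma LieIdeal.leftNormed_mem {I : LieIdeal R A} {x : A} (hx : x ∈ I) (l : List A) :
    leftNormed x l ∈ I := by
  induction l generalizing x with
  | nil => exact hx
  | cons z l ih => exact ih (lie_mem_left R A I x z hx)

lemma leftNormed_smul_replicate {e z : A} {k : R} (hz : ⁅e, z⁆ = k • e) (c : R) (m : ℕ) :
    leftNormed (c • e) (List.replicate m z) = (c * k ^ m) • e := by
  induction m generalizing c with
  | zero => simp
  | succ m ih => rw [List.replicate_succ, leftNormed_cons, smul_lie, hz, smul_smul, ih]; ring_nf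

end LeftNormed

lemma lnorm_eq_leftNormed {K G : Type*} [Field K] (x : FL K G) (l : List (FL K G)) :
    lnorm K G x l = leftNormed x l := rfl

section YRun

variable {K : Type*} [Field K] {G : Type*} [CommGroup G]

lemma mem_yRun {p : ℕ → ℕ} {r : ℕ} {z : FL K G} (hz : z ∈ yRun K G p r) :
    ∃ n < r, z = of K (n, 1) := by
  induction r with
  | zero => simp [yRun] at hz
  | succ r ih =>
    rcases List.mem_append.1 hz with h | h
    · obtain ⟨n, hn, rfl⟩ := ih h
      exact ⟨n, by omega, rfl⟩
    · exact ⟨r, by omega, List.eq_of_mem_replicate h⟩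

lemma yRun_congr {p p' : ℕ → ℕ} {r : ℕ} (h : ∀ n < r, p n = p' n) :
    yRun K G p r = yRun K G p' r := by
  induction r with
  | zero => rfl
  | succ r ih => rw [yRun, yRun, ih fun n hn => h n (by omega), h r (by omega)]

lemma monE12_congr {r : ℕ} {p p' q q' : ℕ → ℕ} (hp : ∀ n < r, p n = p' n)
    (hq : ∀ n < r, q n = q' n) : monE12 K r p q = monE12 K r p' q' := by
  rw [monE12, monE12, yRun_congr hp, yRun_congr hq]

lemma isHom_leftNormed_yRun {g : G} {x : FL K G} (hx : IsHom K G g x) (p : ℕ → ℕ) (r : ℕ) :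
    IsHom K G g (leftNormed x (yRun K G p r)) := by
  suffices ∀ l : List (FL K G), (∀ z ∈ l, ∃ n, z = of K (n, 1)) →
      ∀ x, IsHom K G g x → IsHom K G g (leftNormed x l) from
    this _ (fun z hz => (mem_yRun hz).imp fun _ h => h.2) x hx
  intro l hl
  induction l with
  | nil => exact fun x hx => hx
  | cons z l ih =>
    intro x hx
    obtain ⟨n, rfl⟩ := hl z List.mem_cons_self
    exact ih (fun z hz => hl z (List.mem_cons_of_mem _ hz)) _ (mul_one g ▸ hx.lie (.var n 1))

lemma leftNormed_map_yRun {A : Type*} [LieRing A] [LieAlgebra K A] (χ : FL K G →ₗ⁅K⁆ A)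
    {e : A} {k : ℕ → K} (hk : ∀ n, ⁅e, χ (of K (n, 1))⁆ = k n • e) (c : K) (p : ℕ → ℕ) (r : ℕ) :
    leftNormed (c • e) ((yRun K G p r).map χ) = (c * ∏ n ∈ range r, k n ^ p n) • e := by
  induction r with
  | zero => simp [yRun]
  | succ r ih =>
    rw [yRun, List.map_append, leftNormed_append, ih, List.map_replicate,
      leftNormed_smul_replicate (hk r), prod_range_succ, mul_assoc]

end YRun

section UT3

variable {K : Type*} [Field K]

lemma lie_E3_diagonal (i j : Fin 3) (d : Fin 3 → K) :
    ⁅E3 K i j, Matrix.diagonal d⁆ = (d j - d i) • E3 K i j := by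
  ext a b
  simp only [E3, Ring.lie_def, Matrix.sub_apply, Matrix.mul_diagonal, Matrix.diagonal_mul,
    Matrix.smul_apply, Matrix.single_apply, smul_eq_mul]
  split_ifs <;> simp_all [mul_comm]

lemma lie_E3_01_E3_12 : ⁅E3 K 0 1, E3 K 1 2⁆ = E3 K 0 2 := by
  ext a b
  fin_cases a <;> fin_cases b <;>
    simp [E3, Ring.lie_def, Matrix.mul_apply, Matrix.single]

lemma utGrading_one_le :
    utGrading K Gu e1 e2 1 ≤ LinearMap.range (Matrix.diagonalLinearMap (Fin 3) K K) := by
  refine Submodule.span_le.2 ?_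
  rintro m (⟨-, rfl | rfl | rfl⟩ | ⟨h, -⟩ | ⟨h, -⟩ | ⟨h, -⟩)
  any_goals exact absurd h (by decide)
  all_goals exact ⟨Pi.single _ 1, Matrix.diagonal_single _ _⟩

lemma utGrading_e1_le : utGrading K Gu e1 e2 e1 ≤ K ∙ E3 K 0 1 := by
  refine Submodule.span_le.2 ?_
  rintro m (⟨h, -⟩ | ⟨-, rfl⟩ | ⟨h, -⟩ | ⟨h, -⟩)
  any_goals exact absurd h (by decide)
  exact Submodule.mem_span_singleton_self _

lemma utGrading_e2_le : utGrading K Gu e1 e2 e2 ≤ K ∙ E3 K 1 2 := by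
  refine Submodule.span_le.2 ?_
  rintro m (⟨h, -⟩ | ⟨h, -⟩ | ⟨-, rfl⟩ | ⟨h, -⟩)
  any_goals exact absurd h (by decide)
  exact Submodule.mem_span_singleton_self _

lemma exists_coeffs_of_graded {ψ : FL K Gu →ₗ⁅K⁆ M3 K}
    (hψ : ∀ (i : ℕ) (g : Gu), ψ (of K (i, g)) ∈ utGrading K Gu e1 e2 g) :
    ∃ (d : ℕ → Fin 3 → K) (c₁ c₂ : K), ψ (of K (0, e1)) = c₁ • E3 K 0 1 ∧
      ψ (of K (0, e2)) = c₂ • E3 K 1 2 ∧ ∀ n, ψ (of K (n, 1)) = Matrix.diagonal (d n) := by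
  obtain ⟨c₁, hc₁⟩ := Submodule.mem_span_singleton.1 (utGrading_e1_le (hψ 0 e1))
  obtain ⟨c₂, hc₂⟩ := Submodule.mem_span_singleton.1 (utGrading_e2_le (hψ 0 e2))
  choose d hd using fun n => utGrading_one_le (hψ n 1)
  exact ⟨d, c₁, c₂, hc₁.symm, hc₂.symm, fun n => (hd n).symm⟩

lemma map_monE12 (χ : FL K Gu →ₗ⁅K⁆ M3 K) {d : ℕ → Fin 3 → K} {c₁ c₂ : K}
    (h₁ : χ (of K (0, e1)) = c₁ • E3 K 0 1) (h₂ : χ (of K (0, e2)) = c₂ • E3 K 1 2)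
    (hy : ∀ n, χ (of K (n, 1)) = Matrix.diagonal (d n)) (r : ℕ) (p q : ℕ → ℕ) :
    χ (monE12 K r p q) = (c₁ * c₂ * (∏ n ∈ range r, (d n 1 - d n 0) ^ p n) *
      ∏ n ∈ range r, (d n 2 - d n 0) ^ q n) • E3 K 0 2 := by
  have hk (i j : Fin 3) (n : ℕ) : ⁅E3 K i j, χ (of K (n, 1))⁆ = (d n j - d n i) • E3 K i j := by
    rw [hy, lie_E3_diagonal]
  rw [monE12, lnorm_eq_leftNormed, LieHom.map_leftNormed, List.map_append, List.map_cons,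
    leftNormed_append, h₁, leftNormed_map_yRun χ (hk 0 1), leftNormed_cons, h₂, smul_lie,
    lie_smul, lie_E3_01_E3_12, smul_smul, leftNormed_map_yRun χ (hk 0 2)]
  ring_nf

end UT3

section TIdeal

variable {K : Type*} [Field K] {G : Type*} [CommGroup G]

lemma mem_tClosure_iff {S : Set (FL K G)} {a : FL K G} :
    a ∈ tClosure K G S ↔ ∀ I : LieIdeal K (FL K G), IsTIdeal K G I → S ⊆ I → a ∈ I := by
  rw [tClosure, ← LieSubmodule.mem_toSubmodule, LieSubmodule.sInf_toSubmodule, Submodule.mem_sInf]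
  constructor
  · exact fun h I hI hS => h _ ⟨I, ⟨hI, hS⟩, rfl⟩
  · rintro h _ ⟨I, ⟨hI, hS⟩, rfl⟩
    exact h I hI hS

lemma subset_tClosure (S : Set (FL K G)) : S ⊆ tClosure K G S :=
  fun _ ha => mem_tClosure_iff.2 fun _ _ hS => hS ha

lemma isTIdeal_tClosure (S : Set (FL K G)) : IsTIdeal K G (tClosure K G S) :=
  fun φ hφ _ ha => mem_tClosure_iff.2 fun I hI hS => hI φ hφ _ (mem_tClosure_iff.1 ha I hI hS)

end TIdeal

section Subst

variable {K : Type*} [Field K]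

noncomputable def embedSubst (mf a : ℕ → ℕ) (r' : ℕ) : FL K Gu →ₗ⁅K⁆ FL K Gu :=
  lift K fun x => if x = (0, e1) then leftNormed (of K (0, e1)) (yRun K Gu a r')
    else if x.2 = 1 then of K (mf x.1, 1) else of K x

variable (mf a : ℕ → ℕ) (r' : ℕ)

lemma embedSubst_of_e1 :
    embedSubst mf a r' (of K (0, e1)) = leftNormed (of K (0, e1)) (yRun K Gu a r') := by
  simp [embedSubst]

lemma embedSubst_of_e2 : embedSubst mf a r' (of K (0, e2)) = of K (0, e2) := by
  simp [embedSubst, show e2 ≠ e1 by decide, show e2 ≠ 1 by decide]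

lemma embedSubst_of_one (n : ℕ) : embedSubst mf a r' (of K (n, 1)) = of K (mf n, 1) := by
  simp [embedSubst, show (1 : Gu) ≠ e1 by decide]

lemma isGradedSubst_embedSubst : IsGradedSubst K Gu (embedSubst mf a r') := by
  intro i g
  simp only [embedSubst, lift_of_apply]
  split_ifs with h₁ h₂
  · obtain ⟨-, rfl⟩ := Prod.mk.inj h₁
    exact isHom_leftNormed_yRun (.var 0 e1) a r'
  · obtain rfl : g = 1 := h₂
    exact .var _ _
  · exact .var _ _

end Subst

section PushExp

def pushExp (mf : ℕ → ℕ) (r : ℕ) (p : ℕ → ℕ) (j : ℕ) : ℕ :=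
  ∑ n ∈ (range r).filter (mf · = j), p n

variable {mf : ℕ → ℕ} {r r' : ℕ}

lemma sum_pushExp (hmf : Set.MapsTo mf (Set.Iio r) (Set.Iio r')) (p : ℕ → ℕ) :
    ∑ j ∈ range r', pushExp mf r p j = ∑ n ∈ range r, p n :=
  sum_fiberwise_of_maps_to (fun n hn => by simpa using hmf (by simpa using hn)) p

lemma prod_pow_pushExp {M : Type*} [CommMonoid M] (hmf : Set.MapsTo mf (Set.Iio r) (Set.Iio r'))
    (v : ℕ → M) (p : ℕ → ℕ) :
    ∏ j ∈ range r', v j ^ pushExp mf r p j = ∏ n ∈ range r, v (mf n) ^ p n := by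
  rw [← prod_fiberwise_of_maps_to (s := range r) (t := range r') (g := mf)
    (f := fun n => v (mf n) ^ p n) (fun n hn => by simpa using hmf (by simpa using hn))]
  refine prod_congr rfl fun j _ => ?_
  rw [pushExp, ← prod_pow_eq_pow_sum]
  exact prod_congr rfl fun n hn => by rw [(mem_filter.1 hn).2]

lemma pushExp_add (p q : ℕ → ℕ) (j : ℕ) :
    pushExp mf r p j + pushExp mf r q j = pushExp mf r (p + q) j :=
  sum_add_distrib.symm

lemma pushExp_congr {p p' : ℕ → ℕ} (h : ∀ n < r, p n = p' n) (j : ℕ) :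
    pushExp mf r p j = pushExp mf r p' j :=
  sum_congr rfl fun n hn => h n (mem_range.1 (mem_filter.1 hn).1)

lemma pushExp_apply (hmf : StrictMono mf) {n : ℕ} (hn : n < r) (p : ℕ → ℕ) :
    pushExp mf r p (mf n) = p n := by
  rw [pushExp, filter_congr (q := (· = n)) fun k _ => hmf.injective.eq_iff,
    filter_eq' (range r) n, if_pos (mem_range.2 hn), sum_singleton]

lemma pushExp_le (hmf : StrictMono mf) {p p' : ℕ → ℕ} (hle : ∀ n < r, p n ≤ p' (mf n))
    (j : ℕ) : pushExp mf r p j ≤ p' j := by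
  by_cases hj : ∃ n < r, mf n = j
  · obtain ⟨n, hn, rfl⟩ := hj
    exact (pushExp_apply hmf hn p).trans_le (hle n hn)
  · push Not at hj
    rw [pushExp, filter_false_of_mem fun n hn => hj n (mem_range.1 hn), sum_empty]
    exact Nat.zero_le _

lemma pushExp_eq_of_lt (hmf : StrictMono mf) {p p' : ℕ → ℕ} {n₀ : ℕ}
    (h : ∀ k < n₀, p k = p' k) {j : ℕ} (hj : j < mf n₀) :
    pushExp mf r p j = pushExp mf r p' j :=
  sum_congr rfl fun n hn => h n (hmf.lt_iff_lt.1 ((mem_filter.1 hn).2 ▸ hj))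

end PushExp

lemma exists_strictMono_of_higman_Vseq {r r' : ℕ} {p q p' q' : ℕ → ℕ}
    (h : Higman (· ≤ ·) (Vseq r p q) (Vseq r' p' q')) :
    ∃ mf : ℕ → ℕ, StrictMono mf ∧ Set.MapsTo mf (Set.Iio r) (Set.Iio r') ∧
      ∀ n < r, p n ≤ p' (mf n) ∧ q n ≤ q' (mf n) := by
  obtain ⟨L, hsub, hle⟩ := h
  obtain ⟨f, hf⟩ := List.sublist_iff_exists_orderEmbedding_getElem?_eq.1 hsub
  have hlen : L.length = r := by simp [← hle.length_eq, Vseq]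
  have hget (n : ℕ) (hn : n < r) : ∃ hf' : f n < r', L[n]'(by omega) = (p' (f n), q' (f n)) := by
    have hn' := hf n
    rw [List.getElem?_eq_getElem (by omega)] at hn'
    have hfn : f n < r' := by
      by_contra hfn
      rw [List.getElem?_eq_none (by simp [Vseq]; omega)] at hn'
      exact Option.some_ne_none _ hn'
    rw [List.getElem?_eq_getElem (by simpa [Vseq] using hfn), Option.some_inj] at hn'
    exact ⟨hfn, by simpa [Vseq] using hn'⟩
  refine ⟨f, f.strictMono, fun n hn => (hget n hn).1, fun n hn => ?_⟩
  have := hle.get (i := n) (by simpa [Vseq] using hn) (by omega)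
  obtain ⟨-, hL⟩ := hget n hn
  simpa [Vseq, hL] using this

lemma lex_map_range_iff {r : ℕ} {f g : ℕ → ℕ} :
    List.Lex (· < ·) ((List.range r).map f) ((List.range r).map g) ↔
      ∃ n < r, (∀ k < n, f k = g k) ∧ f n < g n := by
  rw [List.lex_lt, List.lt_iff_exists]
  simp only [List.length_map, List.length_range, lt_irrefl, and_false, false_or,
    List.getElem_map, List.getElem_range]
  exact ⟨fun ⟨n, hn, _, hk, hlt⟩ => ⟨n, hn, hk, hlt⟩, fun ⟨n, hn, hk, hlt⟩ => ⟨n, hn, hn, hk, hlt⟩⟩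

section Membership

variable {K : Type*} [Field K] {mf a b : ℕ → ℕ} {r r' : ℕ}

lemma monE12_sub_leftNormed_embedSubst_mem (hmaps : Set.MapsTo mf (Set.Iio r) (Set.Iio r'))
    (p q : ℕ → ℕ) :
    monE12 K r' (fun j => a j + pushExp mf r p j) (fun j => b j + pushExp mf r q j) -
      leftNormed (embedSubst mf a r' (monE12 K r p q)) (yRun K Gu b r') ∈ IdUT3 K Gu e1 e2 := by
  intro ψ hψ
  obtain ⟨d, c₁, c₂, h₁, h₂, hy⟩ := exists_coeffs_of_graded hψ
  have hk (i j : Fin 3) (n : ℕ) : ⁅E3 K i j, ψ (of K (n, 1))⁆ = (d n j - d n i) • E3 K i j := by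
    rw [hy, lie_E3_diagonal]
  set χ := ψ.comp (embedSubst mf a r')
  have hχ₁ : χ (of K (0, e1)) = (c₁ * ∏ j ∈ range r', (d j 1 - d j 0) ^ a j) • E3 K 0 1 := by
    rw [LieHom.comp_apply, embedSubst_of_e1, LieHom.map_leftNormed, h₁,
      leftNormed_map_yRun ψ (hk 0 1)]
  have hχ₂ : χ (of K (0, e2)) = c₂ • E3 K 1 2 := by
    rw [LieHom.comp_apply, embedSubst_of_e2, h₂]
  have hχy (n : ℕ) : χ (of K (n, 1)) = Matrix.diagonal (d (mf n)) := by
    rw [LieHom.comp_apply, embedSubst_of_one, hy]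
  rw [map_sub, sub_eq_zero, LieHom.map_leftNormed, map_monE12 ψ h₁ h₂ hy,
    ← LieHom.comp_apply, map_monE12 χ hχ₁ hχ₂ hχy, leftNormed_map_yRun ψ (hk 0 2)]
  simp only [pow_add, prod_mul_distrib, prod_pow_pushExp hmaps]
  ring_nf

end Membership

namespace E12Data

variable {K : Type*} [Field K]

-- Reducible, so that `Fin (d.embed mf r' a b).t` is seen as `Fin d.t` by `dsimp` and `rw`.
abbrev embed (d : E12Data K) (mf : ℕ → ℕ) (r' : ℕ) (a b : ℕ → ℕ) : E12Data K where
  r := r'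
  t := d.t
  α := d.α
  p s j := a j + pushExp mf d.r (d.p s) j
  q s j := b j + pushExp mf d.r (d.q s) j

variable {d : E12Data K} {mf : ℕ → ℕ} {r' : ℕ} {a b : ℕ → ℕ}

lemma Valid.embed (hd : d.Valid) (hmf : StrictMono mf)
    (hmaps : Set.MapsTo mf (Set.Iio d.r) (Set.Iio r')) : (d.embed mf r' a b).Valid := by
  obtain ⟨ht, hα, hdeg, hdist⟩ := hd
  refine ⟨ht, hα, fun s s' j _ => ?_, fun s s' h => hdist s s' fun n hn => ?_⟩
  · have := pushExp_congr (mf := mf) (p := d.p s + d.q s) (p' := d.p s' + d.q s')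
      (fun n hn => hdeg s s' n hn) j
    dsimp only [embed]
    rw [← pushExp_add, ← pushExp_add] at this
    omega
  · obtain ⟨hp, hq⟩ := h (mf n) (hmaps hn)
    dsimp only [embed] at hp hq
    rw [pushExp_apply hmf hn, pushExp_apply hmf hn] at hp hq
    omega

lemma IsLead.embed {s₀ : Fin d.t} (h : d.IsLead s₀) (hmf : StrictMono mf)
    (hmaps : Set.MapsTo mf (Set.Iio d.r) (Set.Iio r')) : (d.embed mf r' a b).IsLead s₀ := by
  intro s hs
  dsimp only [monLT, embed]
  rw [sum_add_distrib, sum_add_distrib, sum_pushExp hmaps, sum_pushExp hmaps]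
  rcases h s hs with hlt | ⟨heq, hlex⟩
  · exact .inl (by omega)
  · refine .inr ⟨by omega, ?_⟩
    obtain ⟨n₀, hn₀, hk, hlt⟩ := lex_map_range_iff.1 hlex
    refine lex_map_range_iff.2 ⟨mf n₀, hmaps hn₀, fun j hj => ?_, ?_⟩
    · rw [pushExp_eq_of_lt hmf hk hj]
    · rw [pushExp_apply hmf hn₀, pushExp_apply hmf hn₀]
      omega

lemma embed_elem_mem (hmaps : Set.MapsTo mf (Set.Iio d.r) (Set.Iio r')) :
    (d.embed mf r' a b).elem ∈ tClosure K Gu {d.elem} ⊔ IdUT3 K Gu e1 e2 := by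
  set y := leftNormed (embedSubst mf a r' d.elem) (yRun K Gu b r')
  have hy : y ∈ tClosure K Gu {d.elem} :=
    LieIdeal.leftNormed_mem (isTIdeal_tClosure _ _ (isGradedSubst_embedSubst mf a r') _
      (subset_tClosure _ (Set.mem_singleton _))) _
  have hdiff : (d.embed mf r' a b).elem - y ∈ IdUT3 K Gu e1 e2 := by
    have : (d.embed mf r' a b).elem - y = ∑ s, d.α s •
        (monE12 K r' ((d.embed mf r' a b).p s) ((d.embed mf r' a b).q s) -
          leftNormed (embedSubst mf a r' (monE12 K d.r (d.p s) (d.q s))) (yRun K Gu b r')) := by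
      simp only [elem, y, map_sum, map_smul, leftNormed_sum, leftNormed_smul, smul_sub,
        sum_sub_distrib]
    rw [this]
    exact sum_mem fun s _ =>
      (IdUT3 K Gu e1 e2).smul_mem _ (monE12_sub_leftNormed_embedSubst_mem hmaps _ _)
  exact (LieSubmodule.mem_sup _ _ _).2 ⟨y, hy, _, hdiff, add_sub_cancel _ _⟩

end E12Data

theorem stmt6_general (K : Type*) [Field K] (d d' : E12Data K) (hd : d.Valid)
    (s₀ : Fin d.t) (s₀' : Fin d'.t) (h₀ : d.IsLead s₀)
    (hH : Higman (· ≤ ·) (Vseq d.r (d.p s₀) (d.q s₀)) (Vseq d'.r (d'.p s₀') (d'.q s₀'))) :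
    ∃ d'' : E12Data K, d''.Valid ∧
      d''.elem ∈ tClosure K Gu {d.elem} ⊔ IdUT3 K Gu e1 e2 ∧
      ∃ s₀'' : Fin d''.t, d''.IsLead s₀'' ∧
        monE12 K d''.r (d''.p s₀'') (d''.q s₀'') = monE12 K d'.r (d'.p s₀') (d'.q s₀') := by
  obtain ⟨mf, hmf, hmaps, hle⟩ := exists_strictMono_of_higman_Vseq hH
  refine ⟨d.embed mf d'.r (fun j => d'.p s₀' j - pushExp mf d.r (d.p s₀) j)
      (fun j => d'.q s₀' j - pushExp mf d.r (d.q s₀) j), hd.embed hmf hmaps,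
    E12Data.embed_elem_mem hmaps, s₀, h₀.embed hmf hmaps,
    monE12_congr (fun j _ => ?_) (fun j _ => ?_)⟩
  · exact Nat.sub_add_cancel (pushExp_le hmf (fun n hn => (hle n hn).1) j)
  · exact Nat.sub_add_cancel (pushExp_le hmf (fun n hn => (hle n hn).2) j)

/-- **Lemma.** If `f`, `h` are polynomials of type `(e₁,e₂)` and `V_{M(f)} ⪯ V_{M(h)}` in the
Higman order, then there exists `h' ∈ ⟨f⟩^{T_G} + Id_G(UT₃⁽⁻⁾, Γ(e₁,e₂))`, of type `(e₁,e₂)`,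
with `M(h') = M(h)`. -/
theorem stmt6 (K : Type*) [Field K] (d d' : E12Data K) (hd : d.Valid) (hd' : d'.Valid)
    (s₀ : Fin d.t) (s₀' : Fin d'.t) (h₀ : d.IsLead s₀) (h₀' : d'.IsLead s₀')
    (hH : Higman (· ≤ ·) (Vseq d.r (d.p s₀) (d.q s₀)) (Vseq d'.r (d'.p s₀') (d'.q s₀'))) :
    ∃ d'' : E12Data K, d''.Valid ∧
      d''.elem ∈ tClosure K Gu {d.elem} ⊔ IdUT3 K Gu e1 e2 ∧
      ∃ s₀'' : Fin d''.t, d''.IsLead s₀'' ∧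
        monE12 K d''.r (d''.p s₀'') (d''.q s₀'') = monE12 K d'.r (d'.p s₀') (d'.q s₀') :=
  stmt6_general K d d' hd s₀ s₀' h₀ hH
end
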